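/- Projection preserves the quadratic eigenvalue stability: if M, D, K are symmetric with M, K positive definite and D positive semidefinite, and V has full column rank, then every eigenvalue of the reduced pencil λ² V^T M V + λ V^T D V + V^T K V has non-positive real part. -/

import Mathlib

/-!
A null vector `x` of the reduced pencil turns `det = 0` into the scalar equation
`a λ² + b λ + c = 0` with `a = x* VᵀMV x > 0` (full column rank makes `VᵀMV` positive definite),
`b = x* VᵀDV x ≥ 0` and `c = x* VᵀKV x ≥ 0`. If `Re λ > 0`, the imaginary part of the equation,
`Im λ (2a Re λ + b) = 0`, forces `λ` to be real, and then the left side is positive.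
-/

open Matrix
open scoped ComplexOrder

namespace Matrix

lemma mulVec_injective_of_rank_eq_card {K m n : Type*} [Field K] [Fintype n]
    {A : Matrix m n K} (hA : A.rank = Fintype.card n) : Function.Injective A.mulVec := by
  have h := A.mulVecLin.finrank_range_add_finrank_ker
  rw [← rank, hA, Module.finrank_fintype_fun_eq_card] at h
  have hker : LinearMap.ker A.mulVecLin = ⊥ := Submodule.finrank_eq_zero.mp (by omega)
  exact LinearMap.ker_eq_bot.mp hker

variable {n : Type*} [Fintype n]

lemma PosSemidef.map_ofReal {A : Matrix n n ℝ} (hA : A.PosSemidef) :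
    (A.map Complex.ofReal).PosSemidef := by
  classical
  obtain ⟨B, rfl⟩ : ∃ B : Matrix n n ℝ, A = star B * B := by
    open scoped MatrixOrder in exact CStarAlgebra.nonneg_iff_eq_star_mul_self.mp hA.nonneg
  have hmap : (star B * B).map Complex.ofReal = (B.map Complex.ofReal)ᴴ * B.map Complex.ofReal := by
    ext i j
    simp [Matrix.mul_apply, Matrix.conjTranspose_apply]
  rw [hmap]
  exact posSemidef_conjTranspose_mul_self _

lemma PosDef.map_ofReal [DecidableEq n] {A : Matrix n n ℝ} (hA : A.PosDef) :
    (A.map Complex.ofReal).PosDef := by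
  refine hA.posSemidef.map_ofReal.posDef_iff_det_ne_zero.mpr ?_
  have hdet : (A.map Complex.ofReal).det = (A.det : ℂ) := (RingHom.map_det Complex.ofRealHom A).symm
  rw [hdet]
  exact Complex.ofReal_ne_zero.mpr hA.det_pos.ne'

end Matrix

lemma Complex.re_nonpos_of_quadratic_eq_zero {a b c l : ℂ} (ha : 0 < a) (hb : 0 ≤ b) (hc : 0 ≤ c)
    (h : a * l ^ 2 + b * l + c = 0) : l.re ≤ 0 := by
  rw [Complex.pos_iff] at ha
  rw [Complex.nonneg_iff] at hb hc
  have hre := congrArg Complex.re h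
  have him := congrArg Complex.im h
  simp only [add_re, add_im, mul_re, mul_im, pow_two, ← ha.2, ← hb.2, ← hc.2, zero_re, zero_im,
    zero_mul, sub_zero, add_zero] at hre him
  by_contra! hl
  have him_zero : l.im = 0 := by
    have : l.im * (2 * a.re * l.re + b.re) = 0 := by linarith
    exact (mul_eq_zero.mp this).resolve_right (by nlinarith [mul_pos ha.1 hl, hb.1])
  simp only [him_zero, mul_zero, sub_zero] at hre
  nlinarith [mul_pos ha.1 (mul_pos hl hl)]

lemma re_nonpos_of_det_quadratic_pencil_eq_zero {n : Type*} [Fintype n] [DecidableEq n]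
    {A B C : Matrix n n ℂ} (hA : A.PosDef) (hB : B.PosSemidef) (hC : C.PosSemidef) {l : ℂ}
    (h : (l ^ 2 • A + l • B + C).det = 0) : l.re ≤ 0 := by
  obtain ⟨x, hx, hxker⟩ := exists_mulVec_eq_zero_iff.mpr h
  refine Complex.re_nonpos_of_quadratic_eq_zero (hA.dotProduct_mulVec_pos hx)
    (hB.dotProduct_mulVec_nonneg x) (hC.dotProduct_mulVec_nonneg x) ?_
  have hform := congrArg (star x ⬝ᵥ ·) hxker
  simpa [add_mulVec, smul_mulVec, dotProduct_add, dotProduct_smul, mul_comm] using hform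

theorem stmt_11 (n r : ℕ)
    (M D K : Matrix (Fin n) (Fin n) ℝ)
    (hM : M.PosDef) (hK : K.PosDef) (hD : D.PosSemidef)
    (V : Matrix (Fin n) (Fin r) ℝ) (hV : V.rank = r)
    (l : ℂ)
    (hdet : (l ^ 2 • (V.transpose * M * V).map (Complex.ofReal)
      + l • (V.transpose * D * V).map (Complex.ofReal)
      + (V.transpose * K * V).map (Complex.ofReal)).det = 0) :
    l.re ≤ 0 := by
  have hVinj : Function.Injective V.mulVec :=
    Matrix.mulVec_injective_of_rank_eq_card (by rwa [Fintype.card_fin])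
  rw [← Matrix.conjTranspose_eq_transpose_of_trivial] at hdet
  exact re_nonpos_of_det_quadratic_pencil_eq_zero
    (hM.conjTranspose_mul_mul_same hVinj).map_ofReal
    (hD.conjTranspose_mul_mul_same V).map_ofReal
    (hK.conjTranspose_mul_mul_same hVinj).posSemidef.map_ofReal hdet
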